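/- arXiv:2508.15238 — 2 statements merged into one kernel-verified Lean document; each statement's English description precedes it below -/
import Mathlib

section
/- Let 𝒢 = (V, ℰ) be a temporal graph, x a timestamp, and (u,v) a pair of distinct vertices adjacent in the detemporalized graph of 𝒢. Then, in ℕ ∪ {∞}, the edge k-core time satisfies σ_x(u,v,𝒢) = max{ Sup_x(u,v,𝒢), σ_x(u,𝒢), σ_x(v,𝒢) }. -/
/-
Every condition in the definition of `σ_x(u, v, 𝒢)` is monotone in the end timestamp `t`:
enlarging `[x, t]` only adds edges to `G_{[x,t]}`, so a `k`-dense set stays `k`-dense and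
`C_k(G_{[x,t]})` grows, and `u ~ v` in `G_{[x,t]}` iff some `(u, v, s) ∈ ℰ` has `x ≤ s ≤ t`.
Hence `σ_x(u, v, 𝒢) ≤ t` iff all three conditions hold at `t`, i.e. iff each of
`Sup_x(u, v, 𝒢)`, `σ_x(u, 𝒢)`, `σ_x(v, 𝒢)` is `≤ t`; two elements of `ℕ∞` with the same
natural upper bounds are equal.
-/

open scoped Classical

noncomputable section

/-- A temporal graph on a vertex type `V`: a finite set of temporal edges
`(u, v, t)` with `u ≠ v`, symmetric in the two endpoints. -/
structure TemporalGraph (V : Type*) where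
  E : Finset (V × V × ℕ)
  ne : ∀ e ∈ E, e.1 ≠ e.2.1
  symm : ∀ u v t, (u, v, t) ∈ E → (v, u, t) ∈ E

variable {V : Type*}

/-- The detemporalized (projected) simple graph of `G` over the interval `[ts, te]`. -/
def detemp (G : TemporalGraph V) (ts te : ℕ) : SimpleGraph V where
  Adj u v := ∃ t, ts ≤ t ∧ t ≤ te ∧ (u, v, t) ∈ G.E
  symm := ⟨fun u v ⟨t, h1, h2, h3⟩ => ⟨t, h1, h2, G.symm u v t h3⟩⟩
  loopless := ⟨fun u ⟨_, _, _, h3⟩ => (G.ne _ h3) rfl⟩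

/-- The detemporalized simple graph of `G` over all timestamps. -/
def detempAll (G : TemporalGraph V) : SimpleGraph V where
  Adj u v := ∃ t, (u, v, t) ∈ G.E
  symm := ⟨fun u v ⟨t, h3⟩ => ⟨t, G.symm u v t h3⟩⟩
  loopless := ⟨fun u ⟨_, h3⟩ => (G.ne _ h3) rfl⟩

/-- `S` is `k`-dense in the simple graph `G` if every vertex of `S` has at
least `k` neighbors inside `S`. -/
def kDense (k : ℕ) (G : SimpleGraph V) (S : Set V) : Prop :=
  ∀ v ∈ S, k ≤ {u | u ∈ S ∧ G.Adj v u}.ncard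

/-- `C_k(G)`: the union of all `k`-dense sets of `G`. -/
def coreSet (k : ℕ) (G : SimpleGraph V) : Set V :=
  ⋃₀ {S | kDense k G S}

/-- The projected temporal edge set of `G` over `[ts, te]`. -/
def projE (G : TemporalGraph V) (ts te : ℕ) : Finset (V × V × ℕ) :=
  G.E.filter fun e => ts ≤ e.2.2 ∧ e.2.2 ≤ te

/-- The vertex set of the temporal `k`-core of `G` over `[ts, te]`. -/
def tcoreV (k : ℕ) (G : TemporalGraph V) (ts te : ℕ) : Set V :=
  coreSet k (detemp G ts te)

/-- The temporal edge set of the temporal `k`-core of `G` over `[ts, te]`. -/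
def tcoreE (k : ℕ) (G : TemporalGraph V) (ts te : ℕ) : Finset (V × V × ℕ) :=
  (projE G ts te).filter fun e => e.1 ∈ tcoreV k G ts te ∧ e.2.1 ∈ tcoreV k G ts te

/-- The `k`-core time `σ_x(v, G)` of a vertex `v` w.r.t. start timestamp `x`,
in `ℕ∞` (it is `⊤` if no suitable timestamp exists). -/
def coreTime (k : ℕ) (G : TemporalGraph V) (x : ℕ) (v : V) : ℕ∞ :=
  sInf ((fun t : ℕ => (t : ℕ∞)) '' {t | x ≤ t ∧ v ∈ tcoreV k G x t})

/-- The `k`-core time `σ_x(u, v, G)` of a pair `(u, v)` w.r.t. start timestamp `x`. -/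
def edgeCoreTime (k : ℕ) (G : TemporalGraph V) (x : ℕ) (u v : V) : ℕ∞ :=
  sInf ((fun t : ℕ => (t : ℕ∞)) ''
    {t | x ≤ t ∧ u ∈ tcoreV k G x t ∧ v ∈ tcoreV k G x t ∧ (detemp G x t).Adj u v})

/-- The support time `Sup_x(u, v, G)`: the minimum timestamp `t ≥ x` with `(u, v, t) ∈ ℰ`. -/
def supTime (G : TemporalGraph V) (x : ℕ) (u v : V) : ℕ∞ :=
  sInf ((fun t : ℕ => (t : ℕ∞)) '' {t | x ≤ t ∧ (u, v, t) ∈ G.E})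

/-- The `k`-degree time `d_x(v, G)`: the minimum timestamp `t ≥ x` such that `v`
has at least `k` neighbors in the detemporalized graph over `[x, t]`. -/
def degTime (k : ℕ) (G : TemporalGraph V) (x : ℕ) (v : V) : ℕ∞ :=
  sInf ((fun t : ℕ => (t : ℕ∞)) '' {t | x ≤ t ∧ k ≤ ((detemp G x t).neighborSet v).ncard})

/-- The `k`-th smallest element of a multiset of values in `ℕ∞`
(`⊤` if the multiset has fewer than `k` elements). -/
def kthSmallest (m : Multiset ℕ∞) (k : ℕ) : ℕ∞ :=
  (m.sort (· ≤ ·)).getD (k - 1) ⊤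

end

namespace ENat

theorem sInf_image_natCast_le_natCast_iff {S : Set ℕ} {n : ℕ} :
    sInf ((fun t : ℕ => (t : ℕ∞)) '' S) ≤ n ↔ ∃ t ∈ S, t ≤ n := by
  constructor
  · intro h
    rcases S.eq_empty_or_nonempty with rfl | hS
    · simp at h
    · rw [sInf_image, ← natCast_sInf hS, Nat.cast_le] at h
      exact ⟨sInf S, Nat.sInf_mem hS, h⟩
  · rintro ⟨t, ht, htn⟩
    exact (sInf_le (Set.mem_image_of_mem _ ht)).trans (Nat.cast_le.2 htn)

theorem eq_of_forall_le_natCast_iff {a b : ℕ∞} (h : ∀ n : ℕ, a ≤ n ↔ b ≤ n) : a = b := by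
  have le_of_le_natCast : ∀ {a b : ℕ∞}, (∀ n : ℕ, b ≤ n → a ≤ n) → a ≤ b := by
    intro a b h
    induction b using ENat.recTopCoe with
    | top => exact le_top
    | coe m => exact h m le_rfl
  exact le_antisymm (le_of_le_natCast fun n => (h n).2) (le_of_le_natCast fun n => (h n).1)

end ENat

section Monotonicity

variable {V : Type*} [Finite V] {k : ℕ}

theorem kDense.mono {G H : SimpleGraph V} {S : Set V} (hGH : G ≤ H) (hS : kDense k G S) :
    kDense k H S := fun v hv =>
  (hS v hv).trans <| Set.ncard_le_ncard (fun _ ⟨hw, hvw⟩ => ⟨hw, hGH hvw⟩) (Set.toFinite _)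

theorem coreSet_mono {G H : SimpleGraph V} (hGH : G ≤ H) : coreSet k G ⊆ coreSet k H :=
  Set.sUnion_subset_sUnion fun _ hS => kDense.mono hGH hS

end Monotonicity

section TemporalGraph

variable {V : Type*} (G : TemporalGraph V)

theorem detemp_mono_right {ts te te' : ℕ} (h : te ≤ te') : detemp G ts te ≤ detemp G ts te' :=
  fun _ _ ⟨s, hts, hte, hs⟩ => ⟨s, hts, hte.trans h, hs⟩

theorem tcoreV_mono_right [Finite V] (k ts : ℕ) : Monotone (tcoreV k G ts) :=
  fun _ _ h => coreSet_mono (detemp_mono_right G h)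

theorem supTime_le_natCast_iff (x n : ℕ) (u v : V) :
    supTime G x u v ≤ n ↔ (detemp G x n).Adj u v := by
  rw [supTime, ENat.sInf_image_natCast_le_natCast_iff]
  exact ⟨fun ⟨s, ⟨hxs, hs⟩, hsn⟩ => ⟨s, hxs, hsn, hs⟩,
    fun ⟨s, hxs, hsn, hs⟩ => ⟨s, ⟨hxs, hs⟩, hsn⟩⟩

variable [Finite V] (k : ℕ)

theorem coreTime_le_natCast_iff (x n : ℕ) (v : V) :
    coreTime k G x v ≤ n ↔ x ≤ n ∧ v ∈ tcoreV k G x n := by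
  rw [coreTime, ENat.sInf_image_natCast_le_natCast_iff]
  exact ⟨fun ⟨t, ⟨hxt, hv⟩, htn⟩ => ⟨hxt.trans htn, tcoreV_mono_right G k x htn hv⟩,
    fun ⟨hxn, hv⟩ => ⟨n, ⟨hxn, hv⟩, le_rfl⟩⟩

theorem edgeCoreTime_le_natCast_iff (x n : ℕ) (u v : V) :
    edgeCoreTime k G x u v ≤ n ↔
      x ≤ n ∧ u ∈ tcoreV k G x n ∧ v ∈ tcoreV k G x n ∧ (detemp G x n).Adj u v := by
  rw [edgeCoreTime, ENat.sInf_image_natCast_le_natCast_iff]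
  constructor
  · rintro ⟨t, ⟨hxt, hu, hv, huv⟩, htn⟩
    exact ⟨hxt.trans htn, tcoreV_mono_right G k x htn hu, tcoreV_mono_right G k x htn hv,
      detemp_mono_right G htn huv⟩
  · exact fun h => ⟨n, h, le_rfl⟩

end TemporalGraph

theorem stmt6_general {V : Type*} [Fintype V] (k : ℕ) (G : TemporalGraph V)
    (x : ℕ) (u v : V) :
    edgeCoreTime k G x u v =
      max (supTime G x u v) (max (coreTime k G x u) (coreTime k G x v)) := by
  refine ENat.eq_of_forall_le_natCast_iff fun n => ?_
  simp only [max_le_iff, edgeCoreTime_le_natCast_iff, supTime_le_natCast_iff,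
    coreTime_le_natCast_iff]
  exact ⟨fun ⟨hxn, hu, hv, huv⟩ => ⟨huv, ⟨hxn, hu⟩, hxn, hv⟩,
    fun ⟨huv, ⟨hxn, hu⟩, _, hv⟩ => ⟨hxn, hu, hv, huv⟩⟩

/-- For a pair of distinct vertices `(u, v)` adjacent in the
detemporalized graph of `G`, the edge `k`-core time satisfies
`σ_x(u, v, G) = max {Sup_x(u, v, G), σ_x(u, G), σ_x(v, G)}`. -/
theorem stmt6 {V : Type*} [Fintype V] (k : ℕ) (G : TemporalGraph V)
    (x : ℕ) (u v : V) (hadj : (detempAll G).Adj u v) :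
    edgeCoreTime k G x u v =
      max (supTime G x u v) (max (coreTime k G x u) (coreTime k G x v)) :=
  stmt6_general k G x u v
end

section
/- Let 𝒢 = (V, ℰ) be a temporal graph with k ≥ 1, let ts ≤ te, and suppose the temporal k-core 𝒯_{[ts,te]}(𝒢) contains at least one temporal edge. Let ts* and te* be the minimum and maximum timestamps among the temporal edges of 𝒯_{[ts,te]}(𝒢). Then ts ≤ ts* ≤ te* ≤ te and 𝒯_{[ts*,te*]}(𝒢) = 𝒯_{[ts,te]}(𝒢); i.e., the temporal k-core over its own tightest time interval equals the original temporal k-core. -/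
open scoped Classical

lemma kDense.subset_coreSet {k : ℕ} {Γ : SimpleGraph V} {S : Set V} (h : kDense k Γ S) :
    S ⊆ coreSet k Γ :=
  fun _ hv => Set.mem_sUnion.2 ⟨S, h, hv⟩

lemma kDense.of_adj_imp [Finite V] {k : ℕ} {Γ Γ' : SimpleGraph V} {S : Set V}
    (hadj : ∀ u ∈ S, ∀ v ∈ S, Γ.Adj u v → Γ'.Adj u v) (h : kDense k Γ S) : kDense k Γ' S :=
  fun v hv => (h v hv).trans <|
    Set.ncard_le_ncard (fun u hu => ⟨hu.1, hadj v hv u hu.1 hu.2⟩) (Set.toFinite _)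

lemma kDense_coreSet [Finite V] (k : ℕ) (Γ : SimpleGraph V) : kDense k Γ (coreSet k Γ) := by
  intro v hv
  obtain ⟨S, hS, hvS⟩ := Set.mem_sUnion.1 hv
  exact (hS v hvS).trans <|
    Set.ncard_le_ncard (fun u hu => ⟨hS.subset_coreSet hu.1, hu.2⟩) (Set.toFinite _)

lemma coreSet_mono_s13 [Finite V] {k : ℕ} {Γ Γ' : SimpleGraph V} (h : Γ ≤ Γ') :
    coreSet k Γ ⊆ coreSet k Γ' :=
  ((kDense_coreSet k Γ).of_adj_imp fun _ _ _ _ huv => h huv).subset_coreSet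

lemma detemp_mono {G : TemporalGraph V} {ts te a b : ℕ} (hts : ts ≤ a) (hte : b ≤ te) :
    detemp G a b ≤ detemp G ts te :=
  fun _ _ ⟨t, hat, htb, ht⟩ => ⟨t, hts.trans hat, htb.trans hte, ht⟩

lemma mem_tcoreE {k : ℕ} {G : TemporalGraph V} {ts te : ℕ} {e : V × V × ℕ} :
    e ∈ tcoreE k G ts te ↔ e ∈ G.E ∧ (ts ≤ e.2.2 ∧ e.2.2 ≤ te) ∧
      e.1 ∈ tcoreV k G ts te ∧ e.2.1 ∈ tcoreV k G ts te := by
  simp only [tcoreE, projE, Finset.mem_filter, and_assoc]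

section Tightening

variable [Finite V] {k : ℕ} {G : TemporalGraph V} {ts te a b : ℕ}

/- The core of the interval `[ts, te]` only sees the edges of `tcoreE`, so it survives shrinking
the interval to any `[a, b]` that still contains all of their timestamps. -/
lemma tcoreV_eq_of_timestamps_mem (hts : ts ≤ a) (hte : b ≤ te)
    (h : ∀ e ∈ tcoreE k G ts te, a ≤ e.2.2 ∧ e.2.2 ≤ b) :
    tcoreV k G a b = tcoreV k G ts te := by
  refine (coreSet_mono_s13 (detemp_mono hts hte)).antisymm ?_
  refine ((kDense_coreSet k _).of_adj_imp ?_).subset_coreSet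
  rintro u hu v hv ⟨t, htst, htte, ht⟩
  obtain ⟨hat, htb⟩ := h (u, v, t) (mem_tcoreE.2 ⟨ht, ⟨htst, htte⟩, hu, hv⟩)
  exact ⟨t, hat, htb, ht⟩

lemma tcoreE_eq_of_timestamps_mem (hts : ts ≤ a) (hte : b ≤ te)
    (h : ∀ e ∈ tcoreE k G ts te, a ≤ e.2.2 ∧ e.2.2 ≤ b) :
    tcoreE k G a b = tcoreE k G ts te := by
  ext e
  rw [mem_tcoreE, mem_tcoreE, tcoreV_eq_of_timestamps_mem hts hte h]
  refine ⟨fun ⟨he, ⟨hae, heb⟩, hcore⟩ => ⟨he, ⟨hts.trans hae, heb.trans hte⟩, hcore⟩,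
    fun he => ⟨he.1, h e (mem_tcoreE.2 he), he.2.2⟩⟩

end Tightening

theorem stmt13_general {V : Type*} [Fintype V] (k : ℕ)
    (G : TemporalGraph V) (ts te : ℕ)
    (hne : (tcoreE k G ts te).Nonempty)
    (tsS teS : ℕ)
    (htsS : tsS = (((tcoreE k G ts te).image fun e => e.2.2).min' (hne.image _)))
    (hteS : teS = (((tcoreE k G ts te).image fun e => e.2.2).max' (hne.image _))) :
    ts ≤ tsS ∧ tsS ≤ teS ∧ teS ≤ te ∧
      tcoreV k G tsS teS = tcoreV k G ts te ∧
      tcoreE k G tsS teS = tcoreE k G ts te := by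
  set stamps := (tcoreE k G ts te).image fun e => e.2.2
  have hmem : ∀ e ∈ tcoreE k G ts te, tsS ≤ e.2.2 ∧ e.2.2 ≤ teS := fun e he =>
    have hstamp : e.2.2 ∈ stamps := Finset.mem_image_of_mem _ he
    ⟨htsS ▸ stamps.min'_le _ hstamp, hteS ▸ stamps.le_max' _ hstamp⟩
  have hstamps : ∀ t ∈ stamps, ts ≤ t ∧ t ≤ te := fun t ht => by
    obtain ⟨e, he, rfl⟩ := Finset.mem_image.1 ht
    exact (mem_tcoreE.1 he).2.1
  have hts : ts ≤ tsS := htsS ▸ stamps.le_min' _ _ fun t ht => (hstamps t ht).1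
  have hte : teS ≤ te := hteS ▸ stamps.max'_le _ _ fun t ht => (hstamps t ht).2
  obtain ⟨e, he⟩ := hne
  exact ⟨hts, (hmem e he).1.trans (hmem e he).2, hte,
    tcoreV_eq_of_timestamps_mem hts hte hmem, tcoreE_eq_of_timestamps_mem hts hte hmem⟩

/-- If `k ≥ 1`, `ts ≤ te`, and the temporal `k`-core `𝒯_{[ts, te]}(G)`
has at least one temporal edge, then its tightest time interval `[ts*, te*]`
(where `ts*` and `te*` are the minimum and maximum edge timestamps) satisfies
`ts ≤ ts* ≤ te* ≤ te` and `𝒯_{[ts*, te*]}(G) = 𝒯_{[ts, te]}(G)`. -/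
theorem stmt13 {V : Type*} [Fintype V] (k : ℕ) (hk : 1 ≤ k)
    (G : TemporalGraph V) (ts te : ℕ) (hle : ts ≤ te)
    (hne : (tcoreE k G ts te).Nonempty)
    (tsS teS : ℕ)
    (htsS : tsS = (((tcoreE k G ts te).image fun e => e.2.2).min' (hne.image _)))
    (hteS : teS = (((tcoreE k G ts te).image fun e => e.2.2).max' (hne.image _))) :
    ts ≤ tsS ∧ tsS ≤ teS ∧ teS ≤ te ∧
      tcoreV k G tsS teS = tcoreV k G ts te ∧
      tcoreE k G tsS teS = tcoreE k G ts te :=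
  stmt13_general k G ts te hne tsS teS htsS hteS
end
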